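/- arXiv:1201.0086 — 3 statements merged into one kernel-verified Lean document; each statement's English description precedes it below -/
import Mathlib

section
/- (Rank-one perturbation inequality for resolvent traces.) Let B be a p×p Hermitian positive semidefinite complex matrix, s ∈ ℂ^p, and σ > 0. Then 0 ≤ tr (B + σI)⁻¹ − tr (B + s s* + σI)⁻¹ ≤ 1/σ. -/
/-!
With `A = B + σI` and `y = A⁻¹ s`, the Sherman–Morrison formula gives
`tr A⁻¹ - tr (A + s s*)⁻¹ = ‖y‖² / (1 + s* A⁻¹ s)`,
and `s* A⁻¹ s = y* A y ≥ σ ‖y‖²` because `B ⪰ 0`. Hence the difference is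
`‖y‖² / (1 + q)` with `q ≥ σ ‖y‖² ≥ 0`, which lies in `[0, 1/σ]`.
-/

open Matrix
open scoped ComplexOrder

namespace Matrix

variable {K n : Type*} [Field K] [Fintype n] [DecidableEq n]

theorem inv_add_vecMulVec {A : Matrix n n K} (hA : IsUnit A) (u v : n → K)
    (h : 1 + v ⬝ᵥ A⁻¹ *ᵥ u ≠ 0) :
    (A + vecMulVec u v)⁻¹ =
      A⁻¹ - (1 + v ⬝ᵥ A⁻¹ *ᵥ u)⁻¹ • vecMulVec (A⁻¹ *ᵥ u) (v ᵥ* A⁻¹) := by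
  refine inv_eq_right_inv ?_
  have hAA : A * A⁻¹ = 1 := mul_nonsing_inv A ((isUnit_iff_isUnit_det A).mp hA)
  set c := 1 + v ⬝ᵥ A⁻¹ *ᵥ u with hc
  have hcoef : c⁻¹ * (v ⬝ᵥ A⁻¹ *ᵥ u) = 1 - c⁻¹ := by
    field_simp
    rw [hc]
    ring
  rw [add_mul, mul_sub, mul_sub, hAA, Matrix.mul_smul, Matrix.mul_smul, mul_vecMulVec,
    mulVec_mulVec, hAA, one_mulVec, vecMulVec_mul, vecMulVec_mul_vecMulVec, vecMulVec_smul,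
    smul_smul, hcoef]
  module

theorem trace_inv_sub_trace_inv_add_vecMulVec {A : Matrix n n K} (hA : IsUnit A) (u v : n → K)
    (h : 1 + v ⬝ᵥ A⁻¹ *ᵥ u ≠ 0) :
    A⁻¹.trace - (A + vecMulVec u v)⁻¹.trace =
      (v ᵥ* A⁻¹ ⬝ᵥ A⁻¹ *ᵥ u) / (1 + v ⬝ᵥ A⁻¹ *ᵥ u) := by
  rw [inv_add_vecMulVec hA u v h, trace_sub, trace_smul, trace_vecMulVec, sub_sub_cancel,
    dotProduct_comm (A⁻¹ *ᵥ u), smul_eq_mul, inv_mul_eq_div]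

theorem IsHermitian.trace_inv_sub_trace_inv_add_vecMulVec_star [StarRing K]
    {A : Matrix n n K} (hA : A.IsHermitian) (hAu : IsUnit A) (s : n → K)
    (h : 1 + star s ⬝ᵥ A⁻¹ *ᵥ s ≠ 0) :
    A⁻¹.trace - (A + vecMulVec s (star s))⁻¹.trace =
      (star (A⁻¹ *ᵥ s) ⬝ᵥ A⁻¹ *ᵥ s) / (1 + star s ⬝ᵥ A⁻¹ *ᵥ s) := by
  rw [trace_inv_sub_trace_inv_add_vecMulVec hAu s (star s) h, star_mulVec, hA.inv.eq]

theorem IsHermitian.star_dotProduct_inv_mulVec [StarRing K] {A : Matrix n n K}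
    (hA : A.IsHermitian) (hAu : IsUnit A) (s : n → K) :
    star s ⬝ᵥ A⁻¹ *ᵥ s = star (A⁻¹ *ᵥ s) ⬝ᵥ A *ᵥ A⁻¹ *ᵥ s := by
  rw [star_mulVec, hA.inv.eq, mulVec_mulVec,
    mul_nonsing_inv A ((isUnit_iff_isUnit_det A).mp hAu), one_mulVec, dotProduct_mulVec]

end Matrix

theorem Complex.div_one_add_nonneg_and_le_inv {x q : ℂ} {σ : ℝ} (hσ : 0 < σ) (hx : 0 ≤ x)
    (hq : σ * x ≤ q) : 0 ≤ x / (1 + q) ∧ x / (1 + q) ≤ (σ⁻¹ : ℝ) := by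
  obtain ⟨r, rfl⟩ : ∃ r : ℝ, x = r :=
    ⟨x.re, Complex.eq_re_of_ofReal_le (r := 0) (by simpa using hx)⟩
  obtain ⟨t, rfl⟩ : ∃ t : ℝ, q = t :=
    ⟨q.re, Complex.eq_re_of_ofReal_le (r := σ * r) (by simpa using hq)⟩
  have hr : 0 ≤ r := by exact_mod_cast hx
  have hσr : σ * r ≤ t := by exact_mod_cast hq
  have ht : 0 < 1 + t := by nlinarith
  have hle : r / (1 + t) ≤ σ⁻¹ := by
    rw [div_le_iff₀ ht]
    field_simp
    nlinarith
  exact ⟨by exact_mod_cast div_nonneg hr ht.le, by exact_mod_cast hle⟩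

/-- Rank-one perturbation inequality for resolvent traces:
`0 ≤ tr (B + σI)⁻¹ − tr (B + s s* + σI)⁻¹ ≤ 1/σ`. -/
theorem resolvent_trace_rank_one_perturbation
    (p : ℕ) (B : Matrix (Fin p) (Fin p) ℂ) (hB : B.PosSemidef)
    (s : Fin p → ℂ) (σ : ℝ) (hσ : 0 < σ) :
    0 ≤ ((B + (σ : ℂ) • 1)⁻¹.trace
          - (B + vecMulVec s (star s) + (σ : ℂ) • 1)⁻¹.trace).re ∧
    ((B + (σ : ℂ) • 1)⁻¹.trace
          - (B + vecMulVec s (star s) + (σ : ℂ) • 1)⁻¹.trace).re ≤ 1 / σ ∧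
    ((B + (σ : ℂ) • 1)⁻¹.trace
          - (B + vecMulVec s (star s) + (σ : ℂ) • 1)⁻¹.trace).im = 0 := by
  set A := B + (σ : ℂ) • 1
  have hA : A.PosDef := PosDef.posSemidef_add hB (PosDef.one.smul (Complex.zero_lt_real.mpr hσ))
  set y := A⁻¹ *ᵥ s
  have hquad : star s ⬝ᵥ A⁻¹ *ᵥ s = star y ⬝ᵥ B *ᵥ y + σ * (star y ⬝ᵥ y) := by
    rw [hA.isHermitian.star_dotProduct_inv_mulVec hA.isUnit, add_mulVec, dotProduct_add,
      smul_mulVec, one_mulVec, dotProduct_smul, smul_eq_mul]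
  have hσq : (σ : ℂ) * (star y ⬝ᵥ y) ≤ star s ⬝ᵥ A⁻¹ *ᵥ s :=
    hquad ▸ le_add_of_nonneg_left (hB.dotProduct_mulVec_nonneg y)
  have hdenom : 1 + star s ⬝ᵥ A⁻¹ *ᵥ s ≠ 0 :=
    (add_pos_of_pos_of_nonneg one_pos (hA.inv.posSemidef.dotProduct_mulVec_nonneg s)).ne'
  obtain ⟨hnonneg, hle⟩ :=
    Complex.div_one_add_nonneg_and_le_inv hσ (dotProduct_star_self_nonneg y) hσq
  rw [add_right_comm,
    hA.isHermitian.trace_inv_sub_trace_inv_add_vecMulVec_star hA.isUnit s hdenom, one_div]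
  exact ⟨(Complex.nonneg_iff.mp hnonneg).1, (Complex.le_def.mp hle).1,
    (Complex.nonneg_iff.mp hnonneg).2.symm⟩
end

section
/- (Identity (4.2), difference-quotient formula for m.) Fix y > 0 and σ₁, σ₂ > 0 with σ₁ ≠ σ₂, and write m₁ = m(σ₁), m₂ = m(σ₂) where m(σ) = −(1+σ−y−√((1+y+σ)²−4y))/(2yσ). Then (1+y m₁)(1+y m₂) − y m₁ m₂ ≠ 0 and (m₂ − m₁)/(σ₁ − σ₂) = m₁ m₂ (1+y m₁)(1+y m₂) / ( (1+y m₁)(1+y m₂) − y m₁ m₂ ). -/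
/-!
Both `m₁` and `m₂` are positive roots of their quadratics `y σ m² + (1 + σ - y) m - 1 = 0`.
Subtracting `m₂ (1 + y m₂)` times the first equation from `m₁ (1 + y m₁)` times the second
gives the polynomial identity `(σ₁ - σ₂) m₁ m₂ (1 + y m₁)(1 + y m₂) = (m₂ - m₁) D`, with `D` the
claimed denominator. The left side is nonzero, so `D ≠ 0`, and dividing yields the formula.
-/

noncomputable def mpRoot (y σ : ℝ) : ℝ :=
  -((1 + σ - y - √((1 + y + σ) ^ 2 - 4 * y)) / (2 * y * σ))

section mpRoot

variable {y σ : ℝ}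

lemma mp_discriminant_eq (y σ : ℝ) :
    (1 + y + σ) ^ 2 - 4 * y = (1 + σ - y) ^ 2 + 4 * y * σ := by
  ring

lemma sq_sqrt_mp_discriminant (hy : 0 ≤ y) (hσ : 0 ≤ σ) :
    √((1 + y + σ) ^ 2 - 4 * y) ^ 2 = (1 + σ - y) ^ 2 + 4 * y * σ := by
  rw [Real.sq_sqrt (by rw [mp_discriminant_eq]; positivity), mp_discriminant_eq]

lemma mpRoot_pos (hy : 0 < y) (hσ : 0 < σ) : 0 < mpRoot y σ := by
  have hsq := sq_sqrt_mp_discriminant hy.le hσ.le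
  have hlt : 1 + σ - y < √((1 + y + σ) ^ 2 - 4 * y) := by
    nlinarith [Real.sqrt_nonneg ((1 + y + σ) ^ 2 - 4 * y), mul_pos hy hσ]
  rw [mpRoot, neg_pos]
  exact div_neg_of_neg_of_pos (by linarith) (by positivity)

lemma mpRoot_quadratic (hy : 0 < y) (hσ : 0 < σ) :
    y * σ * mpRoot y σ ^ 2 + (1 + σ - y) * mpRoot y σ - 1 = 0 := by
  have hsq := sq_sqrt_mp_discriminant hy.le hσ.le
  rw [mpRoot]
  generalize √((1 + y + σ) ^ 2 - 4 * y) = s at hsq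
  field_simp
  linear_combination hsq

end mpRoot

lemma sub_mul_eq_sub_mul_of_quadratic {R : Type*} [CommRing R] {y σ₁ σ₂ m₁ m₂ : R}
    (h₁ : y * σ₁ * m₁ ^ 2 + (1 + σ₁ - y) * m₁ - 1 = 0)
    (h₂ : y * σ₂ * m₂ ^ 2 + (1 + σ₂ - y) * m₂ - 1 = 0) :
    (σ₁ - σ₂) * (m₁ * m₂ * (1 + y * m₁) * (1 + y * m₂)) =
      (m₂ - m₁) * ((1 + y * m₁) * (1 + y * m₂) - y * m₁ * m₂) := by
  linear_combination (m₂ * (1 + y * m₂)) * h₁ - (m₁ * (1 + y * m₁)) * h₂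

/-- Identity (4.2): the difference-quotient formula for `m`. -/
theorem mp_difference_quotient (y σ₁ σ₂ : ℝ) (hy : 0 < y)
    (hσ₁ : 0 < σ₁) (hσ₂ : 0 < σ₂) (hne : σ₁ ≠ σ₂)
    (m₁ m₂ : ℝ)
    (hm₁ : m₁ = -((1 + σ₁ - y - Real.sqrt ((1 + y + σ₁)^2 - 4*y)) / (2*y*σ₁)))
    (hm₂ : m₂ = -((1 + σ₂ - y - Real.sqrt ((1 + y + σ₂)^2 - 4*y)) / (2*y*σ₂))) :
    (1 + y*m₁) * (1 + y*m₂) - y*m₁*m₂ ≠ 0 ∧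
    (m₂ - m₁) / (σ₁ - σ₂) =
      m₁ * m₂ * (1 + y*m₁) * (1 + y*m₂) / ((1 + y*m₁) * (1 + y*m₂) - y*m₁*m₂) := by
  change m₁ = mpRoot y σ₁ at hm₁
  change m₂ = mpRoot y σ₂ at hm₂
  have hpos₁ := hm₁ ▸ mpRoot_pos hy hσ₁
  have hpos₂ := hm₂ ▸ mpRoot_pos hy hσ₂
  have key := sub_mul_eq_sub_mul_of_quadratic
    (hm₁ ▸ mpRoot_quadratic hy hσ₁) (hm₂ ▸ mpRoot_quadratic hy hσ₂)
  have hσ : σ₁ - σ₂ ≠ 0 := sub_ne_zero.mpr hne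
  have hD : (1 + y*m₁) * (1 + y*m₂) - y*m₁*m₂ ≠ 0 := by
    rintro hD
    rw [hD, mul_zero] at key
    exact mul_ne_zero hσ (by positivity) key
  refine ⟨hD, ?_⟩
  rw [div_eq_div_iff hσ hD]
  linear_combination -key
end

section
/- (Positivity facts ensuring the covariance W is well defined.) Fix y > 0 and let m(σ) = −(1+σ−y−√((1+y+σ)²−4y))/(2yσ) for σ > 0. Then: (i) 0 < σ m(σ) < 1 for every σ > 0; (ii) for all σ₁, σ₂ > 0, y (1 − σ₁ m(σ₁)) (1 − σ₂ m(σ₂)) < 1; consequently W(σ₁,σ₂) = y m(σ₁) m(σ₂) / (1 − y(1−σ₁ m(σ₁))(1−σ₂ m(σ₂))) is well defined and strictly positive. -/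
/-- Positivity facts ensuring that the covariance kernel `W` is well defined. -/
theorem mp_W_well_defined (y : ℝ) (hy : 0 < y)
    (m : ℝ → ℝ)
    (hm : ∀ σ : ℝ, 0 < σ →
      m σ = -((1 + σ - y - Real.sqrt ((1 + y + σ)^2 - 4*y)) / (2*y*σ))) :
    (∀ σ : ℝ, 0 < σ → 0 < σ * m σ ∧ σ * m σ < 1) ∧
    (∀ σ₁ σ₂ : ℝ, 0 < σ₁ → 0 < σ₂ →
      y * (1 - σ₁ * m σ₁) * (1 - σ₂ * m σ₂) < 1) ∧
    (∀ σ₁ σ₂ : ℝ, 0 < σ₁ → 0 < σ₂ →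
      0 < y * m σ₁ * m σ₂ / (1 - y * (1 - σ₁ * m σ₁) * (1 - σ₂ * m σ₂))) := by
  -- Key facts for each σ > 0
  have key : ∀ σ : ℝ, 0 < σ →
      0 < m σ ∧ 0 < σ * m σ ∧ σ * m σ < 1 ∧
      (1 - σ * m σ) * (1 + y + σ + Real.sqrt ((1 + y + σ)^2 - 4*y)) = 2 := by
    intro σ hσ
    set s := Real.sqrt ((1 + y + σ)^2 - 4*y) with hs
    have hD0 : 0 ≤ (1 + y + σ)^2 - 4*y := by nlinarith [sq_nonneg (1 + σ - y), mul_pos hy hσ]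
    have hs2 : s^2 = (1 + y + σ)^2 - 4*y := Real.sq_sqrt hD0
    have hs0 : 0 ≤ s := Real.sqrt_nonneg _
    have hsgt : 1 + σ - y < s := by nlinarith [mul_pos hy hσ]
    have hslt : s < 1 + y + σ := by nlinarith
    have hmσ : m σ = (s - (1 + σ - y)) / (2*y*σ) := by
      rw [hm σ hσ]; ring
    have h2yσ : 0 < 2*y*σ := by positivity
    have hmpos : 0 < m σ := by
      rw [hmσ]; exact div_pos (by linarith) h2yσ
    have hσm : σ * m σ = (s - (1 + σ - y)) / (2*y) := by
      rw [hmσ]; field_simp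
    have h1 : 0 < σ * m σ := mul_pos hσ hmpos
    have h2 : σ * m σ < 1 := by
      rw [hσm, div_lt_one (by linarith)]; linarith
    refine ⟨hmpos, h1, h2, ?_⟩
    rw [hσm]
    field_simp
    nlinarith [hs2]
  -- The middle claim
  have mid : ∀ σ₁ σ₂ : ℝ, 0 < σ₁ → 0 < σ₂ →
      y * (1 - σ₁ * m σ₁) * (1 - σ₂ * m σ₂) < 1 := by
    intro σ₁ σ₂ h1 h2
    obtain ⟨-, -, hlt1, heq1⟩ := key σ₁ h1
    obtain ⟨-, -, hlt2, heq2⟩ := key σ₂ h2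
    set s₁ := Real.sqrt ((1 + y + σ₁)^2 - 4*y) with hs1
    set s₂ := Real.sqrt ((1 + y + σ₂)^2 - 4*y) with hs2
    have hs10 : 0 ≤ s₁ := Real.sqrt_nonneg _
    have hs20 : 0 ≤ s₂ := Real.sqrt_nonneg _
    have hB1 : 1 + y < 1 + y + σ₁ + s₁ := by linarith
    have hB2 : 1 + y < 1 + y + σ₂ + s₂ := by linarith
    have hA1 : 0 ≤ 1 - σ₁ * m σ₁ := by linarith
    have hA2 : 0 ≤ 1 - σ₂ * m σ₂ := by linarith
    -- (1 - σᵢmᵢ) = 2 / Bᵢ with Bᵢ > 1+y, and (1+y)² ≥ 4y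
    have hBB : (1 + y) * (1 + y) < (1 + y + σ₁ + s₁) * (1 + y + σ₂ + s₂) := by
      nlinarith
    have hprod : ((1 - σ₁ * m σ₁) * (1 - σ₂ * m σ₂)) *
        ((1 + y + σ₁ + s₁) * (1 + y + σ₂ + s₂)) = 4 := by
      calc ((1 - σ₁ * m σ₁) * (1 - σ₂ * m σ₂)) *
          ((1 + y + σ₁ + s₁) * (1 + y + σ₂ + s₂))
          = ((1 - σ₁ * m σ₁) * (1 + y + σ₁ + s₁)) *
            ((1 - σ₂ * m σ₂) * (1 + y + σ₂ + s₂)) := by ring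
        _ = 2 * 2 := by rw [heq1, heq2]
        _ = 4 := by norm_num
    have hBpos : (0:ℝ) < (1 + y + σ₁ + s₁) * (1 + y + σ₂ + s₂) := by
      apply mul_pos <;> linarith
    have hB4y : 4 * y < (1 + y + σ₁ + s₁) * (1 + y + σ₂ + s₂) := by
      nlinarith [hBB, sq_nonneg (1 - y)]
    have hA : (1 - σ₁ * m σ₁) * (1 - σ₂ * m σ₂)
        = 4 / ((1 + y + σ₁ + s₁) * (1 + y + σ₂ + s₂)) :=
      eq_div_of_mul_eq hBpos.ne' hprod
    calc y * (1 - σ₁ * m σ₁) * (1 - σ₂ * m σ₂)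
        = y * ((1 - σ₁ * m σ₁) * (1 - σ₂ * m σ₂)) := by ring
      _ = y * 4 / ((1 + y + σ₁ + s₁) * (1 + y + σ₂ + s₂)) := by
          rw [hA]; ring
      _ < 1 := by rw [div_lt_one hBpos]; linarith
  refine ⟨fun σ hσ => ⟨(key σ hσ).2.1, (key σ hσ).2.2.1⟩, mid, ?_⟩
  intro σ₁ σ₂ h1 h2
  have hm1 := (key σ₁ h1).1
  have hm2 := (key σ₂ h2).1
  exact div_pos (by positivity) (by linarith [mid σ₁ σ₂ h1 h2])
end
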